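/- Let m, n ≥ 0, let [a,b] and [c,d] be intervals with b − a = d − c = h > 0, and let F ∈ C^{m+1,n+1}([a,b]×[c,d]), i.e., all mixed partial derivatives F^{(i,j)} = ∂^{i+j}F/∂x^i∂y^j with 0 ≤ i ≤ m+1, 0 ≤ j ≤ n+1 exist and are continuous on [a,b]×[c,d]. Let W_{m,n} := { G_1 + G_2 : G_1, G_2 ∈ C([a,b]×[c,d]), G_1(·,v) ∈ Π_m for every v ∈ [c,d], and G_2(u,·) ∈ Π_n for every u ∈ [a,b] }. Then inf{ ‖F − G‖_{∞,[a,b]×[c,d]} : G ∈ W_{m,n} } ≤ ‖F^{(m+1,n+1)}‖_{∞,[a,b]×[c,d]} · h^{m+n+2} / ( 2^{m+n+2}·(m+1)!·(n+1)! ). -/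

import Mathlib

/-!
Let `𝐏_m`, `𝐐_n` be the Taylor projectors in `x` and `y` at the centre `(x₀, y₀)` of the
rectangle. The Boolean sum `(𝐏_m ⊕ 𝐐_n) F = 𝐏_m (I - 𝐐_n) F + 𝐐_n F` lies in `W_{m,n}`, and
`F - (𝐏_m ⊕ 𝐐_n) F = (I - 𝐏_m)(I - 𝐐_n) F`. The Lagrange bound for the `y`-remainder of
`F^{(m+1,0)}(u, ·)` bounds the `(m+1)`-st `x`-derivative of the `y`-remainder of `F(·, v)`, and the
Lagrange bound in `x` then gives
`|F - (𝐏_m ⊕ 𝐐_n) F| ≤ ‖F^{(m+1,n+1)}‖ |u - x₀|^{m+1} |v - y₀|^{n+1} / ((m+1)! (n+1)!)`,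
with `|u - x₀|, |v - y₀| ≤ h / 2`.

Derivatives are given as families of functions rather than as `iteratedDerivWithin`, so the
one-variable Lagrange bound is proved by induction on the degree from the comparison principle
`image_norm_le_of_norm_deriv_right_le_deriv_boundary`.
-/

open scoped BigOperators

noncomputable section

/-- Sup norm `‖f‖_{∞,S}` of a function over a set `S`. -/
def supN {α : Type*} (S : Set α) (f : α → ℝ) : ℝ := ⨆ z : S, |f z.1|

/-- Operator norm of `L` over continuous functions on `R` with sup norm `≤ 1`. -/
def opN {α : Type*} [TopologicalSpace α] (R : Set α) (L : (α → ℝ) → α → ℝ) : ℝ :=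
  ⨆ G : {G : α → ℝ // ContinuousOn G R ∧ supN R G ≤ 1}, supN R (L G.1)

/-- Bernstein basis function `B_i^m` scaled to `[a,b]`. -/
def bern (m : ℕ) (a b : ℝ) (i : ℕ) : ℝ → ℝ := fun x =>
  (m.choose i : ℝ) * ((b - x) / (b - a)) ^ (m - i) * ((x - a) / (b - a)) ^ i

/-- Uniform node `x_i^m = a + (i/m)(b-a)`. -/
def node (m : ℕ) (a b : ℝ) (i : ℕ) : ℝ := a + (i : ℝ) / (m : ℝ) * (b - a)

/-- Bernstein collocation matrix `T_m = (B_j^m(x_i^m))_{ij}`. -/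
def Tmat (m : ℕ) (a b : ℝ) : Matrix (Fin (m + 1)) (Fin (m + 1)) ℝ := fun i j =>
  bern m a b j (node m a b i)

/-- Dual functionals `λ_j^m f = (T_m⁻¹ · (f(x_i^m))_i)_j`. -/
def lam (m : ℕ) (a b : ℝ) (j : Fin (m + 1)) (f : ℝ → ℝ) : ℝ :=
  (Tmat m a b)⁻¹.mulVec (fun i => f (node m a b i)) j

/-- `λ_j^m` with a natural-number index (zero out of range). -/
def lamN (m : ℕ) (a b : ℝ) (j : ℕ) (f : ℝ → ℝ) : ℝ :=
  if h : j < m + 1 then lam m a b ⟨j, h⟩ f else 0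

/-- The index map `α^k : i ↦ i·(m_r/m_k)` (when `m_k ∣ m_r` and `i ≤ m_k` the `min` is inert). -/
def alphaF (mk mr : ℕ) (i : Fin (mk + 1)) : Fin (mr + 1) :=
  ⟨min (i.1 * (mr / mk)) mr, Nat.lt_succ_of_le (min_le_right _ _)⟩

/-- Degree elevation matrix `E_{m_k}^{m_r} = (λ_i^{m_r}(B_j^{m_k}))_{ij}`. -/
def Emat (mk mr : ℕ) (a b : ℝ) : Matrix (Fin (mr + 1)) (Fin (mk + 1)) ℝ := fun i j =>
  lam mr a b i (bern mk a b j)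

/-- Row submatrix `E_{m_k}^{m_r}(α^k,:)`. -/
def Esub (mk mr : ℕ) (a b : ℝ) : Matrix (Fin (mk + 1)) (Fin (mk + 1)) ℝ := fun i j =>
  Emat mk mr a b (alphaF mk mr i) j

/-- Dual basis polynomials `D_j^{m_k} = Σ_ℓ (E(α^k,:)⁻¹)_{ℓ j} B_ℓ^{m_k}`. -/
def Dq (mk mr : ℕ) (a b : ℝ) (j : Fin (mk + 1)) : ℝ → ℝ := fun x =>
  ∑ l : Fin (mk + 1), (Esub mk mr a b)⁻¹ l j * bern mk a b l x

/-- `D_j^{m_k}` with a natural-number index (zero out of range). -/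
def DqN (mk mr : ℕ) (a b : ℝ) (j : ℕ) : ℝ → ℝ :=
  if h : j < mk + 1 then Dq mk mr a b ⟨j, h⟩ else 0

/-- Functionals `μ_i^{m_k} = λ_{α^k_i}^{m_r}`. -/
def mu (mk mr : ℕ) (a b : ℝ) (i : Fin (mk + 1)) (f : ℝ → ℝ) : ℝ :=
  lam mr a b (alphaF mk mr i) f

/-- Univariate quasi-interpolant `P_{m_k} f = Σ_i (μ_i^{m_k} f)·D_i^{m_k}`. -/
def Pop (mk mr : ℕ) (a b : ℝ) (f : ℝ → ℝ) : ℝ → ℝ := fun x =>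
  ∑ i : Fin (mk + 1), mu mk mr a b i f * Dq mk mr a b i x

/-- Bivariate extension `𝐏_{m_k} = P_{m_k} × I` (acting in the first variable). -/
def PP (mk mr : ℕ) (a b : ℝ) (F : ℝ × ℝ → ℝ) : ℝ × ℝ → ℝ := fun z =>
  Pop mk mr a b (fun x => F (x, z.2)) z.1

/-- Bivariate extension `𝐐_{n_ℓ} = I × Q_{n_ℓ}` (acting in the second variable). -/
def QQ (nl nr : ℕ) (c d : ℝ) (F : ℝ × ℝ → ℝ) : ℝ × ℝ → ℝ := fun z =>
  Pop nl nr c d (fun y => F (z.1, y)) z.2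

/-- Maximum absolute row sum matrix norm. -/
def rowNorm {p q : ℕ} (A : Matrix (Fin p) (Fin q) ℝ) : ℝ := ⨆ i : Fin p, ∑ j, |A i j|

/-- `C_{m_r} = max_i sup{ |λ_i^{m_r} f| : f ∈ C[a,b], ‖f‖_∞ ≤ 1 }`. -/
def Cbase (mr : ℕ) (a b : ℝ) : ℝ :=
  ⨆ i : Fin (mr + 1),
    ⨆ f : {f : ℝ → ℝ // ContinuousOn f (Set.Icc a b) ∧ supN (Set.Icc a b) f ≤ 1},
      |lam mr a b i f.1|

/-- `C_{m_r,m_k} = C_{m_r}·(m_k+1)·‖E_{m_k}^{m_r}(α^k,:)⁻¹‖_∞`. -/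
def Cconst (mk mr : ℕ) (a b : ℝ) : ℝ :=
  Cbase mr a b * ((mk : ℝ) + 1) * rowNorm (Esub mk mr a b)⁻¹

/-- `Π_m`: univariate polynomial functions of degree at most `m`. -/
def polyF (m : ℕ) : Submodule ℝ (ℝ → ℝ) :=
  Submodule.span ℝ {f : ℝ → ℝ | ∃ i ≤ m, f = fun x => x ^ i}

/-- `Π_p ⊗ Π_q`: bivariate polynomial functions of degree `≤ p` in `x` and `≤ q` in `y`. -/
def polyF2 (p q : ℕ) : Submodule ℝ (ℝ × ℝ → ℝ) :=
  Submodule.span ℝ {F : ℝ × ℝ → ℝ | ∃ i ≤ p, ∃ j ≤ q, F = fun z => z.1 ^ i * z.2 ^ j}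

/-- `S_{𝐦,𝐧} = Σ_{k=0}^r Π_{m_k} ⊗ Π_{n_{r-k}}` (as a space of functions). -/
def SmnF (r : ℕ) (m n : ℕ → ℕ) : Submodule ℝ (ℝ × ℝ → ℝ) :=
  ∑ k ∈ Finset.range (r + 1), polyF2 (m k) (n (r - k))

/-- `Π_p ⊗ Π_q` inside the bivariate polynomial ring. -/
def PiTP (p q : ℕ) : Submodule ℝ (MvPolynomial (Fin 2) ℝ) :=
  Submodule.span ℝ {P | ∃ i ≤ p, ∃ j ≤ q,
    P = MvPolynomial.monomial (Finsupp.single 0 i + Finsupp.single 1 j) (1 : ℝ)}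

/-- `S_{𝐦,𝐧} = Σ_{k=0}^r Π_{m_k} ⊗ Π_{n_{r-k}}` in the bivariate polynomial ring. -/
def SmnP (r : ℕ) (m n : ℕ → ℕ) : Submodule ℝ (MvPolynomial (Fin 2) ℝ) :=
  ∑ k ∈ Finset.range (r + 1), PiTP (m k) (n (r - k))

/-- The rectangle `[a,b] × [c,d]`. -/
def Rect (a b c d : ℝ) : Set (ℝ × ℝ) := Set.Icc a b ×ˢ Set.Icc c d

/-- `Fd` is a system of mixed partial derivatives of `Fd 0 0` of class `C^{p,q}` on the
rectangle: all mixed partials `F^{(i,j)}`, `i ≤ p`, `j ≤ q`, exist and are continuous. -/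
def IsCpq (p q : ℕ) (a b c d : ℝ) (Fd : ℕ → ℕ → ℝ × ℝ → ℝ) : Prop :=
  (∀ i < p, ∀ j ≤ q, ∀ z ∈ Rect a b c d,
      HasDerivWithinAt (fun x => Fd i j (x, z.2)) (Fd (i + 1) j z) (Set.Icc a b) z.1) ∧
  (∀ i ≤ p, ∀ j < q, ∀ z ∈ Rect a b c d,
      HasDerivWithinAt (fun y => Fd i j (z.1, y)) (Fd i (j + 1) z) (Set.Icc c d) z.2) ∧
  (∀ i ≤ p, ∀ j ≤ q, ContinuousOn (Fd i j) (Rect a b c d))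

end

open Set Finset Nat

/-- `f i` plays the role of the `i`-th derivative. -/
noncomputable def taylorSum (f : ℕ → ℝ → ℝ) (k : ℕ) (x₀ x : ℝ) : ℝ :=
  ∑ i ∈ range (k + 1), f i x₀ * (x - x₀) ^ i / i !

lemma taylorSum_self (f : ℕ → ℝ → ℝ) (k : ℕ) (x₀ : ℝ) : taylorSum f k x₀ x₀ = f 0 x₀ := by
  rw [taylorSum, Finset.sum_eq_single 0 (fun i _ hi => by simp [zero_pow hi]) (by simp)]
  simp

lemma hasDerivAt_taylorSum_succ (f : ℕ → ℝ → ℝ) (k : ℕ) (x₀ x : ℝ) :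
    HasDerivAt (taylorSum f (k + 1) x₀) (taylorSum (fun i => f (i + 1)) k x₀ x) x := by
  have hterm (i : ℕ) : HasDerivAt (fun t => f i x₀ * (t - x₀) ^ i / i !)
      (f i x₀ * (i * (x - x₀) ^ (i - 1)) / i !) x :=
    ((((hasDerivAt_id x).sub_const x₀).fun_pow i).const_mul _).div_const _ |>.congr_deriv
      (by simp)
  refine (HasDerivAt.fun_sum fun i (_ : i ∈ range (k + 2)) => hterm i).congr_deriv ?_
  rw [Finset.sum_range_succ' _ (k + 1)]
  simp only [CharP.cast_eq_zero, zero_mul, mul_zero, zero_div, add_zero]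
  refine Finset.sum_congr rfl fun i _ => ?_
  rw [Nat.factorial_succ, Nat.add_sub_cancel]
  push_cast
  field_simp

lemma continuous_taylorSum (f : ℕ → ℝ → ℝ) (k : ℕ) (x₀ : ℝ) : Continuous (taylorSum f k x₀) := by
  unfold taylorSum; fun_prop

lemma ContinuousOn.taylorSum {X : Type*} [TopologicalSpace X] {S : Set X} {f : X → ℕ → ℝ → ℝ}
    {g : X → ℝ} {k : ℕ} {x₀ : ℝ} (hf : ∀ i ≤ k, ContinuousOn (fun z => f z i x₀) S)
    (hg : ContinuousOn g S) : ContinuousOn (fun z => _root_.taylorSum (f z) k x₀ (g z)) S := by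
  unfold _root_.taylorSum
  refine continuousOn_finsetSum _ fun i hi => ?_
  exact ((hf i (Nat.lt_succ_iff.mp (Finset.mem_range.mp hi))).mul
    ((hg.sub continuousOn_const).pow i)).div_const _

lemma pow_sub_mem_polyF {i k : ℕ} (hi : i ≤ k) (x₀ : ℝ) :
    (fun x : ℝ => (x - x₀) ^ i) ∈ polyF k := by
  have hexp : (fun x : ℝ => (x - x₀) ^ i) =
      ∑ t ∈ range (i + 1), ((-x₀) ^ (i - t) * i.choose t) • fun x : ℝ => x ^ t := by
    ext x
    simp only [Finset.sum_apply, Pi.smul_apply, smul_eq_mul, sub_eq_add_neg, add_pow]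
    exact Finset.sum_congr rfl fun t _ => by ring
  rw [hexp]
  exact Submodule.sum_mem _ fun t ht => Submodule.smul_mem _ _ <| Submodule.subset_span
    ⟨t, (Nat.lt_succ_iff.mp (Finset.mem_range.mp ht)).trans hi, rfl⟩

lemma taylorSum_mem_polyF (f : ℕ → ℝ → ℝ) (k : ℕ) (x₀ : ℝ) : taylorSum f k x₀ ∈ polyF k := by
  have hexp : taylorSum f k x₀ =
      ∑ i ∈ range (k + 1), (f i x₀ / i !) • fun x : ℝ => (x - x₀) ^ i := by
    ext x
    simp only [taylorSum, Finset.sum_apply, Pi.smul_apply, smul_eq_mul]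
    exact Finset.sum_congr rfl fun i _ => by ring
  rw [hexp]
  exact Submodule.sum_mem _ fun i hi => Submodule.smul_mem _ _ <|
    pow_sub_mem_polyF (Nat.lt_succ_iff.mp (Finset.mem_range.mp hi)) x₀

lemma abs_le_of_abs_deriv_le_pow_of_le {g g' : ℝ → ℝ} {x₀ x C : ℝ} {p : ℕ} (hx : x₀ ≤ x)
    (hg : ∀ t ∈ Icc x₀ x, HasDerivWithinAt g (g' t) (Icc x₀ x) t) (hg₀ : g x₀ = 0)
    (hg' : ∀ t ∈ Icc x₀ x, |g' t| ≤ C * |t - x₀| ^ p) :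
    |g x| ≤ C * |x - x₀| ^ (p + 1) / (p + 1) := by
  have hB (t : ℝ) :
      HasDerivAt (fun s => C * (s - x₀) ^ (p + 1) / (p + 1)) (C * (t - x₀) ^ p) t := by
    refine ((((hasDerivAt_id t).sub_const x₀).fun_pow (p + 1)).const_mul C).div_const
      ((p : ℝ) + 1) |>.congr_deriv ?_
    simp
    field_simp
  have key := image_norm_le_of_norm_deriv_right_le_deriv_boundary (a := x₀) (b := x)
    (fun t ht => (hg t ht).continuousWithinAt)
    (fun t ht => (hg t (Ico_subset_Icc_self ht)).mono_of_mem_nhdsWithin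
      (Icc_mem_nhdsGE_of_mem ⟨ht.1, ht.2⟩))
    (by simp [hg₀]) hB
    (fun t ht => by
      have := hg' t (Ico_subset_Icc_self ht)
      rwa [abs_of_nonneg (sub_nonneg.mpr ht.1)] at this)
    (right_mem_Icc.mpr hx)
  rwa [abs_of_nonneg (sub_nonneg.mpr hx)]

lemma abs_le_of_abs_deriv_le_pow {g g' : ℝ → ℝ} {x₀ x C : ℝ} {p : ℕ}
    (hg : ∀ t ∈ uIcc x₀ x, HasDerivWithinAt g (g' t) (uIcc x₀ x) t) (hg₀ : g x₀ = 0)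
    (hg' : ∀ t ∈ uIcc x₀ x, |g' t| ≤ C * |t - x₀| ^ p) :
    |g x| ≤ C * |x - x₀| ^ (p + 1) / (p + 1) := by
  rcases le_total x₀ x with hx | hx
  · rw [uIcc_of_le hx] at hg hg'
    exact abs_le_of_abs_deriv_le_pow_of_le hx hg hg₀ hg'
  · rw [uIcc_of_ge hx] at hg hg'
    -- reflect `[x, x₀]` onto `[-x₀, -x]`, where the one-sided estimate applies
    have hmaps : MapsTo Neg.neg (Icc (-x₀) (-x)) (Icc x x₀) :=
      fun s hs => ⟨by linarith [hs.2], by linarith [hs.1]⟩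
    have key := abs_le_of_abs_deriv_le_pow_of_le (g := g ∘ Neg.neg) (g' := fun s => -g' (-s))
      (x₀ := -x₀) (x := -x) (C := C) (p := p) (neg_le_neg hx)
      (fun s hs => ((hg (-s) (hmaps hs)).comp s (hasDerivWithinAt_neg s _) hmaps).congr_deriv
        (mul_neg_one _))
      (by simp [hg₀])
      (fun s hs => by
        rw [abs_neg, show s - -x₀ = -(-s - x₀) by ring, abs_neg]
        exact hg' (-s) (hmaps hs))
    rwa [Function.comp_apply, neg_neg, show -x - -x₀ = -(x - x₀) by ring, abs_neg] at key

theorem abs_sub_taylorSum_le {f : ℕ → ℝ → ℝ} {k : ℕ} {x₀ x M : ℝ}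
    (hf : ∀ i ≤ k, ∀ t ∈ uIcc x₀ x, HasDerivWithinAt (f i) (f (i + 1) t) (uIcc x₀ x) t)
    (hM : ∀ t ∈ uIcc x₀ x, |f (k + 1) t| ≤ M) :
    |f 0 x - taylorSum f k x₀ x| ≤ M / (k + 1)! * |x - x₀| ^ (k + 1) := by
  induction k generalizing f x with
  | zero =>
    have := abs_le_of_abs_deriv_le_pow (g := fun t => f 0 t - f 0 x₀) (C := M) (p := 0)
      (fun t ht => (hf 0 le_rfl t ht).sub_const _) (sub_self _) (by simpa using hM)
    simpa [taylorSum] using this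
  | succ k ih =>
    have hR : ∀ t ∈ uIcc x₀ x, HasDerivWithinAt (fun s => f 0 s - taylorSum f (k + 1) x₀ s)
        (f 1 t - taylorSum (fun i => f (i + 1)) k x₀ t) (uIcc x₀ x) t := fun t ht =>
      (hf 0 (Nat.zero_le _) t ht).sub (hasDerivAt_taylorSum_succ f k x₀ t).hasDerivWithinAt
    have hR' : ∀ t ∈ uIcc x₀ x,
        |f 1 t - taylorSum (fun i => f (i + 1)) k x₀ t| ≤ M / (k + 1)! * |t - x₀| ^ (k + 1) :=
      fun t ht => ih (f := fun i => f (i + 1))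
        (fun i hi s hs => (hf (i + 1) (by omega) s (uIcc_subset_uIcc_left ht hs)).mono
          (uIcc_subset_uIcc_left ht))
        (fun s hs => hM s (uIcc_subset_uIcc_left ht hs))
    calc |f 0 x - taylorSum f (k + 1) x₀ x|
        ≤ M / (k + 1)! * |x - x₀| ^ (k + 1 + 1) / ((k + 1 : ℕ) + 1) :=
          abs_le_of_abs_deriv_le_pow hR (by rw [taylorSum_self, sub_self]) hR'
      _ = M / (k + 1 + 1)! * |x - x₀| ^ (k + 1 + 1) := by
          rw [Nat.factorial_succ (k + 1)]
          push_cast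
          field_simp

section SupNorm

variable {α : Type*} {S : Set α} {f : α → ℝ}

lemma supN_nonneg : 0 ≤ supN S f := Real.iSup_nonneg fun _ => abs_nonneg _

lemma supN_le {C : ℝ} (hC : 0 ≤ C) (h : ∀ z ∈ S, |f z| ≤ C) : supN S f ≤ C :=
  Real.iSup_le (fun z => h z.1 z.2) hC

lemma abs_le_supN [TopologicalSpace α] (hS : IsCompact S) (hf : ContinuousOn f S) {z : α}
    (hz : z ∈ S) : |f z| ≤ supN S f := by
  have hbdd := (hS.image_of_continuousOn hf.abs).bddAbove
  rw [image_eq_range] at hbdd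
  exact le_ciSup hbdd ⟨z, hz⟩

end SupNorm

section BooleanSum

/-- `𝐐_n F^{(i,0)}`, with `𝐐_n` the Taylor projector in `y` at `y₀`. -/
noncomputable def taylorY (Fd : ℕ → ℕ → ℝ × ℝ → ℝ) (n : ℕ) (y₀ : ℝ) (i : ℕ) (z : ℝ × ℝ) : ℝ :=
  taylorSum (fun j y => Fd i j (z.1, y)) n y₀ z.2

/-- `𝐏_m (I - 𝐐_n) F`, so that `taylorXRemY + taylorY 0` is the Boolean sum `(𝐏_m ⊕ 𝐐_n) F`. -/
noncomputable def taylorXRemY (Fd : ℕ → ℕ → ℝ × ℝ → ℝ) (m n : ℕ) (x₀ y₀ : ℝ) (z : ℝ × ℝ) : ℝ :=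
  taylorSum (fun i x => Fd i 0 (x, z.2) - taylorY Fd n y₀ i (x, z.2)) m x₀ z.1

variable {Fd : ℕ → ℕ → ℝ × ℝ → ℝ} {m n : ℕ} {a b c d x₀ y₀ : ℝ}

lemma continuousOn_taylorY {i : ℕ} (hcont : ∀ j ≤ n, ContinuousOn (Fd i j) (Rect a b c d))
    (hy₀ : y₀ ∈ Icc c d) : ContinuousOn (taylorY Fd n y₀ i) (Rect a b c d) := by
  refine ContinuousOn.taylorSum (f := fun z j y => Fd i j (z.1, y)) (fun j hj => ?_)
    continuous_snd.continuousOn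
  refine (hcont j hj).comp (continuous_fst.prodMk continuous_const).continuousOn fun z hz => ?_
  exact mk_mem_prod (mem_prod.mp hz).1 hy₀

lemma continuousOn_taylorXRemY (hcont : ∀ i ≤ m, ContinuousOn (Fd i 0) (Rect a b c d))
    (hx₀ : x₀ ∈ Icc a b) : ContinuousOn (taylorXRemY Fd m n x₀ y₀) (Rect a b c d) := by
  unfold taylorXRemY
  refine ContinuousOn.taylorSum (fun i hi => ?_) continuous_fst.continuousOn
  have hpoly : Continuous fun z : ℝ × ℝ => taylorY Fd n y₀ i (x₀, z.2) :=
    (continuous_taylorSum (fun j y => Fd i j (x₀, y)) n y₀).comp continuous_snd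
  refine ContinuousOn.sub ?_ hpoly.continuousOn
  refine (hcont i hi).comp (continuous_const.prodMk continuous_snd).continuousOn fun z hz => ?_
  exact mk_mem_prod hx₀ (mem_prod.mp hz).2

lemma hasDerivWithinAt_taylorY {p q i : ℕ} (hF : IsCpq p q a b c d Fd) (hi : i < p) (hn : n ≤ q)
    (hy₀ : y₀ ∈ Icc c d) (v : ℝ) {t : ℝ} (ht : t ∈ Icc a b) :
    HasDerivWithinAt (fun x => taylorY Fd n y₀ i (x, v)) (taylorY Fd n y₀ (i + 1) (t, v))
      (Icc a b) t :=
  HasDerivWithinAt.fun_sum fun j hj => ((hF.1 i hi j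
    ((Nat.lt_succ_iff.mp (Finset.mem_range.mp hj)).trans hn) (t, y₀)
    (mk_mem_prod ht hy₀)).mul_const ((v - y₀) ^ j)).div_const (j ! : ℝ)

theorem abs_sub_taylorXRemY_add_taylorY_le {M : ℝ} (hF : IsCpq (m + 1) (n + 1) a b c d Fd)
    (hx₀ : x₀ ∈ Icc a b) (hy₀ : y₀ ∈ Icc c d)
    (hM : ∀ z ∈ Rect a b c d, |Fd (m + 1) (n + 1) z| ≤ M) {z : ℝ × ℝ} (hz : z ∈ Rect a b c d) :
    |Fd 0 0 z - (taylorXRemY Fd m n x₀ y₀ z + taylorY Fd n y₀ 0 z)| ≤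
      M / ((m + 1)! * (n + 1)!) * |z.1 - x₀| ^ (m + 1) * |z.2 - y₀| ^ (n + 1) := by
  obtain ⟨u, v⟩ := z
  obtain ⟨hu, hv⟩ := mem_prod.mp hz
  -- the `y`-Taylor remainders of the `F^{(i,0)}(·, v)` form a derivative family in `x`
  set E : ℕ → ℝ → ℝ := fun i x => Fd i 0 (x, v) - taylorY Fd n y₀ i (x, v) with hE
  have hxsub : uIcc x₀ u ⊆ Icc a b := uIcc_subset_Icc hx₀ hu
  have hysub : uIcc y₀ v ⊆ Icc c d := uIcc_subset_Icc hy₀ hv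
  have hEderiv : ∀ i ≤ m, ∀ t ∈ uIcc x₀ u, HasDerivWithinAt (E i) (E (i + 1) t) (uIcc x₀ u) t :=
    fun i hi t ht => ((hF.1 i (by omega) 0 (Nat.zero_le _) (t, v) (mk_mem_prod (hxsub ht) hv)).sub
      (hasDerivWithinAt_taylorY hF (by omega) (Nat.le_succ n) hy₀ v (hxsub ht))).mono hxsub
  have hEbound : ∀ t ∈ uIcc x₀ u, |E (m + 1) t| ≤ M / (n + 1)! * |v - y₀| ^ (n + 1) :=
    fun t ht => abs_sub_taylorSum_le (f := fun j y => Fd (m + 1) j (t, y))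
      (fun j hj s hs => (hF.2.1 (m + 1) le_rfl j (by omega) (t, s)
        (mk_mem_prod (hxsub ht) (hysub hs))).mono hysub)
      (fun s hs => hM (t, s) (mk_mem_prod (hxsub ht) (hysub hs)))
  have hsplit : Fd 0 0 (u, v) - (taylorXRemY Fd m n x₀ y₀ (u, v) + taylorY Fd n y₀ 0 (u, v)) =
      E 0 u - taylorSum E m x₀ u := by
    simp only [hE, taylorXRemY]
    ring
  rw [hsplit]
  calc |E 0 u - taylorSum E m x₀ u|
      ≤ M / (n + 1)! * |v - y₀| ^ (n + 1) / (m + 1)! * |u - x₀| ^ (m + 1) :=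
        abs_sub_taylorSum_le hEderiv hEbound
    _ = M / ((m + 1)! * (n + 1)!) * |u - x₀| ^ (m + 1) * |v - y₀| ^ (n + 1) := by
        field_simp

end BooleanSum

/-- Distance from an `F ∈ C^{m+1,n+1}` to the sum space
`W_{m,n} = {G₁ + G₂ : G₁(·,v) ∈ Π_m, G₂(u,·) ∈ Π_n}` on a square rectangle of side `h`:
`d(F, W_{m,n}) ≤ ‖F^{(m+1,n+1)}‖_∞ · h^{m+n+2} / (2^{m+n+2}(m+1)!(n+1)!)`. -/
theorem stmt15 (m n : ℕ) (a b c d : ℝ) (h : ℝ) (hha : h = b - a) (hsq : b - a = d - c)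
    (hpos : 0 < h) (Fd : ℕ → ℕ → ℝ × ℝ → ℝ) (hF : IsCpq (m + 1) (n + 1) a b c d Fd) :
    sInf {t : ℝ | ∃ G1 G2 : ℝ × ℝ → ℝ,
        ContinuousOn G1 (Rect a b c d) ∧ ContinuousOn G2 (Rect a b c d) ∧
        (∀ v ∈ Set.Icc c d, ∃ p ∈ polyF m, ∀ u ∈ Set.Icc a b, G1 (u, v) = p u) ∧
        (∀ u ∈ Set.Icc a b, ∃ p ∈ polyF n, ∀ v ∈ Set.Icc c d, G2 (u, v) = p v) ∧
        t = supN (Rect a b c d) (fun z => Fd 0 0 z - (G1 z + G2 z))} ≤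
      supN (Rect a b c d) (Fd (m + 1) (n + 1)) * h ^ (m + n + 2) /
        ((2 : ℝ) ^ (m + n + 2) * ((m + 1).factorial : ℝ) * ((n + 1).factorial : ℝ)) := by
  set x₀ := (a + b) / 2 with hx₀_def
  set y₀ := (c + d) / 2 with hy₀_def
  have hx₀ : x₀ ∈ Icc a b := ⟨by linarith, by linarith⟩
  have hy₀ : y₀ ∈ Icc c d := ⟨by linarith, by linarith⟩
  set M := supN (Rect a b c d) (Fd (m + 1) (n + 1))
  have hM : ∀ z ∈ Rect a b c d, |Fd (m + 1) (n + 1) z| ≤ M := fun z hz =>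
    abs_le_supN (isCompact_Icc.prod isCompact_Icc) (hF.2.2 _ le_rfl _ le_rfl) hz
  have hM₀ : 0 ≤ M := supN_nonneg
  have hG1 := continuousOn_taylorXRemY (m := m) (n := n) (y₀ := y₀)
    (fun i hi => hF.2.2 i (by omega) 0 (Nat.zero_le _)) hx₀
  have hG2 := continuousOn_taylorY (n := n) (fun j hj => hF.2.2 0 (Nat.zero_le _) j (by omega)) hy₀
  refine csInf_le_of_le ⟨0, fun t ⟨_, _, _, _, _, _, ht⟩ => ht ▸ supN_nonneg⟩
    ⟨_, _, hG1, hG2,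
      fun v _ => ⟨taylorSum (fun i x => Fd i 0 (x, v) - taylorY Fd n y₀ i (x, v)) m x₀,
        taylorSum_mem_polyF _ m x₀, fun u _ => rfl⟩,
      fun u _ => ⟨taylorSum (fun j y => Fd 0 j (u, y)) n y₀,
        taylorSum_mem_polyF _ n y₀, fun v _ => rfl⟩, rfl⟩
    (supN_le (by positivity) fun z hz => ?_)
  obtain ⟨hu, hv⟩ := mem_prod.mp hz
  have hux : |z.1 - x₀| ≤ h / 2 := abs_le.mpr ⟨by linarith [hu.1], by linarith [hu.2]⟩
  have hvy : |z.2 - y₀| ≤ h / 2 := abs_le.mpr ⟨by linarith [hv.1], by linarith [hv.2]⟩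
  calc _ ≤ M / ((m + 1)! * (n + 1)!) * |z.1 - x₀| ^ (m + 1) * |z.2 - y₀| ^ (n + 1) :=
        abs_sub_taylorXRemY_add_taylorY_le hF hx₀ hy₀ hM hz
    _ ≤ M / ((m + 1)! * (n + 1)!) * (h / 2) ^ (m + 1) * (h / 2) ^ (n + 1) := by
        gcongr
    _ = _ := by
        rw [div_pow, div_pow]
        field_simp
        ring
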